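/- arXiv:1104.1511 — 6 statements merged into one kernel-verified Lean document; each statement's English description precedes it below -/
import Mathlib

section
/- Let σ > 0, let η(z) = (2z/√(1−z²))·[((1+z)/2)^σ − ((1−z)/2)^σ]^{−1} for z ∈ (0,1), and let g(z) = (σz² − σz + 1)(1+z)^σ. Then η′(z) = 2^{σ+1}·(g(z) − g(−z)) / ((1−z²)^{3/2}·[(1+z)^σ − (1−z)^σ]²) for all z ∈ (0,1). -/
/-!
Away from the endpoints, `((1 ± z)/2)^σ = (1 ± z)^σ / 2^σ`, so
`η(z) = 2^(σ+1) · z/√(1-z²) · D(z)⁻¹` with `D(z) = (1+z)^σ - (1-z)^σ`, which is nonzero on `(0,1)`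
because `σ > 0`. Since `(z/√(1-z²))' = (1-z²)^(-3/2)` and `D' = σ((1+z)^σ/(1+z) + (1-z)^σ/(1-z))`,
the quotient rule puts `η'` over `(1-z²)^(3/2) D²` with numerator
`2^(σ+1) (D - σz((1-z)(1+z)^σ + (1+z)(1-z)^σ)) = 2^(σ+1) (g(z) - g(-z))`.
-/

open Real Set Filter Topology

lemma rpow_three_halves_eq_sqrt_pow_three {x : ℝ} (hx : 0 ≤ x) : x ^ ((3 : ℝ) / 2) = √x ^ 3 := by
  rw [sqrt_eq_rpow, ← rpow_natCast, ← rpow_mul hx]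
  norm_num

lemma hasDerivAt_div_sqrt_one_sub_sq {z : ℝ} (hz : z ^ 2 < 1) :
    HasDerivAt (fun x => x / √(1 - x ^ 2)) (√(1 - z ^ 2) ^ 3)⁻¹ z := by
  have hpos : 0 < 1 - z ^ 2 := by linarith
  have hS : 0 < √(1 - z ^ 2) := sqrt_pos.mpr hpos
  have hsqrt : HasDerivAt (fun x => √(1 - x ^ 2)) (1 / (2 * √(1 - z ^ 2)) * -(2 * z)) z :=
    (hasDerivAt_sqrt hpos.ne').comp z (by simpa using (hasDerivAt_pow 2 z).const_sub 1)
  refine ((hasDerivAt_id' z).fun_div hsqrt hS.ne').congr_deriv ?_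
  have hS2 : √(1 - z ^ 2) ^ 2 = 1 - z ^ 2 := sq_sqrt hpos.le
  field_simp
  rw [hS2]
  ring

lemma hasDerivAt_one_add_rpow_sub_one_sub_rpow (σ : ℝ) {z : ℝ} (hz : z ∈ Ioo (-1 : ℝ) 1) :
    HasDerivAt (fun x => (1 + x) ^ σ - (1 - x) ^ σ)
      (σ * ((1 + z) ^ (σ - 1) + (1 - z) ^ (σ - 1))) z := by
  obtain ⟨hz₁, hz₂⟩ := hz
  have h₁ := ((hasDerivAt_id' z).const_add 1).rpow_const (p := σ) (Or.inl (by linarith))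
  have h₂ := ((hasDerivAt_id' z).const_sub 1).rpow_const (p := σ) (Or.inl (by linarith))
  refine (h₁.fun_sub h₂).congr_deriv ?_
  ring

lemma rpow_one_sub_lt_rpow_one_add {σ z : ℝ} (hσ : 0 < σ) (hz₀ : 0 < z) (hz₁ : z ≤ 1) :
    (1 - z) ^ σ < (1 + z) ^ σ :=
  rpow_lt_rpow (by linarith) (by linarith) hσ

lemma two_mul_div_mul_inv_half_rpow_sub {σ x : ℝ} (hx : x ∈ Icc (-1 : ℝ) 1) :
    2 * x / √(1 - x ^ 2) * (((1 + x) / 2) ^ σ - ((1 - x) / 2) ^ σ)⁻¹ =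
      2 ^ (σ + 1) * (x / √(1 - x ^ 2)) * ((1 + x) ^ σ - (1 - x) ^ σ)⁻¹ := by
  obtain ⟨hx₁, hx₂⟩ := hx
  rw [div_rpow (by linarith) zero_le_two, div_rpow (by linarith) zero_le_two, ← sub_div, inv_div,
    rpow_add_one two_ne_zero]
  ring

/-- formula for `η′(z)` on `(0,1)`. -/
theorem stmt_2 (σ : ℝ) (hσ : 0 < σ) (η g : ℝ → ℝ)
    (hη : ∀ z : ℝ, η z = 2 * z / Real.sqrt (1 - z ^ 2) *
      (((1 + z) / 2) ^ σ - ((1 - z) / 2) ^ σ)⁻¹)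
    (hg : ∀ z : ℝ, g z = (σ * z ^ 2 - σ * z + 1) * (1 + z) ^ σ) :
    ∀ z ∈ Set.Ioo (0 : ℝ) 1,
      deriv η z = (2 : ℝ) ^ (σ + 1) * (g z - g (-z)) /
        ((1 - z ^ 2) ^ ((3 : ℝ) / 2) * ((1 + z) ^ σ - (1 - z) ^ σ) ^ 2) := by
  intro z hz
  have hz' : z ∈ Ioo (-1 : ℝ) 1 := ⟨by linarith [hz.1], hz.2⟩
  have hsq : z ^ 2 < 1 := by nlinarith [hz.1, hz.2]
  have hadd : 1 + z ≠ 0 := by linarith [hz.1]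
  have hsub : 1 - z ≠ 0 := by linarith [hz.2]
  have hS : √(1 - z ^ 2) ≠ 0 := (sqrt_pos.mpr (by linarith)).ne'
  have hS2 : √(1 - z ^ 2) ^ 2 = (1 + z) * (1 - z) := by rw [sq_sqrt (by linarith)]; ring
  have hD := (sub_pos.mpr (rpow_one_sub_lt_rpow_one_add hσ hz.1 hz.2.le)).ne'
  have hη_eq : η =ᶠ[𝓝 z] fun x => 2 ^ (σ + 1) * (x / √(1 - x ^ 2)) *
      ((1 + x) ^ σ - (1 - x) ^ σ)⁻¹ :=
    eventually_of_mem (Ioo_mem_nhds hz'.1 hz'.2) fun x hx =>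
      (hη x).trans (two_mul_div_mul_inv_half_rpow_sub (Ioo_subset_Icc_self hx))
  have hderiv := (((hasDerivAt_div_sqrt_one_sub_sq hsq).const_mul (2 ^ (σ + 1))).mul
    ((hasDerivAt_one_add_rpow_sub_one_sub_rpow σ hz').fun_inv hD)).congr_of_eventuallyEq hη_eq
  rw [hderiv.deriv, hg, hg, neg_sq, mul_neg, ← sub_eq_add_neg,
    rpow_three_halves_eq_sqrt_pow_three (by linarith), rpow_sub_one hadd, rpow_sub_one hsub]
  field_simp
  rw [hS2]
  ring
end

section
/- Let σ_threshold = (3 + √13)/2, let g(z) = (σz² − σz + 1)(1+z)^σ with σ = σ_threshold, and h(z) = g(z) − g(−z). Then h‴(0) = 0, h⁗(0) = 0, and the fifth derivative h⁽⁵⁾(0) = 24(3+√13)(4+√13) > 0. -/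
/-!
Differentiating `(a w² + b w + c) (1 + w) ^ p` gives a function of the same shape, with
coefficients `((p + 2) a, 2 a + (p + 1) b, b + p c, p - 1)`, and the value of such a function at
`0` is `c`. Hence `g⁽ⁿ⁾(0)` is read off the `n`-th iterate of this coefficient map, a polynomial
in `σ`. Since `h` is odd, `h⁽ⁿ⁾(0) = (1 - (-1)ⁿ) g⁽ⁿ⁾(0)`: the even derivatives vanish, and
`h‴(0) = 2 g‴(0) = -4σ(σ² - 3σ - 1)` vanishes exactly at the threshold. Reducing `g⁽⁵⁾(0)` modulo
`σ² = 3σ + 1` gives `24σ(2σ + 1)`, so `h⁽⁵⁾(0) = 48σ(2σ + 1)` with `2σ = 3 + √13`.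
-/

open Filter Topology

theorem iteratedDeriv_sub_comp_neg_zero {𝕜 F : Type*} [NontriviallyNormedField 𝕜]
    [NormedAddCommGroup F] [NormedSpace 𝕜 F] {f : 𝕜 → F} {n : ℕ}
    (hf : ContDiffAt 𝕜 n f 0) :
    iteratedDeriv n (fun x ↦ f x - f (-x)) 0 = (1 - (-1 : 𝕜) ^ n) • iteratedDeriv n f 0 := by
  have hf_neg : ContDiffAt 𝕜 n (fun x ↦ f (-x)) 0 :=
    (neg_zero (G := 𝕜) ▸ hf).comp 0 contDiff_neg.contDiffAt
  rw [iteratedDeriv_fun_sub hf hf_neg, iteratedDeriv_comp_neg, neg_zero, sub_smul, one_smul]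

structure QuadRpow where
  a : ℝ
  b : ℝ
  c : ℝ
  p : ℝ

namespace QuadRpow

variable (q : QuadRpow)

noncomputable def eval (w : ℝ) : ℝ := (q.a * w ^ 2 + q.b * w + q.c) * (1 + w) ^ q.p

def deriv : QuadRpow :=
  ⟨(q.p + 2) * q.a, 2 * q.a + (q.p + 1) * q.b, q.b + q.p * q.c, q.p - 1⟩

theorem eval_zero : q.eval 0 = q.c := by simp [eval]

theorem hasDerivAt_eval {w : ℝ} (hw : 0 < 1 + w) : HasDerivAt q.eval (q.deriv.eval w) w := by
  have hpoly : HasDerivAt (fun w ↦ q.a * w ^ 2 + q.b * w + q.c) (q.a * (2 * w) + q.b) w := by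
    simpa using (((hasDerivAt_pow 2 w).const_mul q.a).fun_add
      ((hasDerivAt_id' w).const_mul q.b)).add_const q.c
  have hpow : HasDerivAt (fun w ↦ (1 + w) ^ q.p) (q.p * (1 + w) ^ (q.p - 1)) w := by
    simpa using ((hasDerivAt_id w).const_add 1).rpow_const (p := q.p) (Or.inl hw.ne')
  have hsplit : (1 + w) ^ q.p = (1 + w) ^ (q.p - 1) * (1 + w) := by
    rw [← Real.rpow_add_one hw.ne', sub_add_cancel]
  refine (hpoly.mul hpow).congr_deriv ?_
  simp only [eval, deriv]
  rw [hsplit]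
  ring

theorem contDiffAt_eval {n : WithTop ℕ∞} {w : ℝ} (hw : 0 < 1 + w) : ContDiffAt ℝ n q.eval w := by
  unfold eval
  have : ContDiffAt ℝ n (fun w : ℝ ↦ (1 + w) ^ q.p) w :=
    (contDiffAt_const.add contDiffAt_id).rpow_const_of_ne hw.ne'
  exact ((contDiffAt_const.mul (contDiffAt_id.pow 2)).add (contDiffAt_const.mul contDiffAt_id)
    |>.add contDiffAt_const).mul this

theorem iteratedDeriv_eval (n : ℕ) {w : ℝ} (hw : 0 < 1 + w) :
    iteratedDeriv n q.eval w = (deriv^[n] q).eval w := by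
  induction n generalizing w with
  | zero => rfl
  | succ n ih =>
    have hloc : iteratedDeriv n q.eval =ᶠ[𝓝 w] (deriv^[n] q).eval := by
      filter_upwards [lt_mem_nhds (by linarith : -1 < w)] with v hv using ih (by linarith)
    rw [iteratedDeriv_succ, hloc.deriv_eq, Function.iterate_succ_apply',
      ((deriv^[n] q).hasDerivAt_eval hw).deriv]

theorem iteratedDeriv_eval_zero (n : ℕ) : iteratedDeriv n q.eval 0 = (deriv^[n] q).c := by
  rw [iteratedDeriv_eval q n (by norm_num), eval_zero]

theorem c_iterate_deriv_three (σ : ℝ) :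
    (deriv^[3] ⟨σ, -σ, 1, σ⟩).c = -2 * σ * (σ ^ 2 - 3 * σ - 1) := by
  simp only [Function.iterate_succ_apply', Function.iterate_zero_apply, deriv]
  ring

theorem c_iterate_deriv_five {σ : ℝ} (hσ : σ ^ 2 - 3 * σ - 1 = 0) :
    (deriv^[5] ⟨σ, -σ, 1, σ⟩).c = 24 * σ * (2 * σ + 1) := by
  simp only [Function.iterate_succ_apply', Function.iterate_zero_apply, deriv]
  linear_combination (28 * σ ^ 2 - 4 * σ ^ 3) * hσ

end QuadRpow

/-- at `σ = σ_threshold = (3+√13)/2`, `h‴(0) = h⁗(0) = 0` and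
`h⁽⁵⁾(0) = 24(3+√13)(4+√13) > 0`. -/
theorem stmt_4 (σ : ℝ) (hσ : σ = (3 + Real.sqrt 13) / 2) (g h : ℝ → ℝ)
    (hg : ∀ z : ℝ, g z = (σ * z ^ 2 - σ * z + 1) * (1 + z) ^ σ)
    (hh : ∀ z : ℝ, h z = g z - g (-z)) :
    iteratedDeriv 3 h 0 = 0 ∧ iteratedDeriv 4 h 0 = 0 ∧
      iteratedDeriv 5 h 0 = 24 * (3 + Real.sqrt 13) * (4 + Real.sqrt 13) ∧
      0 < 24 * (3 + Real.sqrt 13) * (4 + Real.sqrt 13) := by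
  set q : QuadRpow := ⟨σ, -σ, 1, σ⟩
  have hgq : g = q.eval := funext fun z ↦ by rw [hg, QuadRpow.eval]; ring
  have hderiv (n : ℕ) : iteratedDeriv n h 0 = (1 - (-1) ^ n) * (QuadRpow.deriv^[n] q).c := by
    rw [show h = fun z ↦ g z - g (-z) from funext hh, hgq,
      iteratedDeriv_sub_comp_neg_zero (q.contDiffAt_eval (by norm_num)), q.iteratedDeriv_eval_zero,
      smul_eq_mul]
  have hroot : σ ^ 2 - 3 * σ - 1 = 0 := by
    subst hσ
    linear_combination (1 / 4 : ℝ) * Real.sq_sqrt (show (0 : ℝ) ≤ 13 by norm_num)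
  refine ⟨?_, ?_, ?_, by positivity⟩
  · rw [hderiv, QuadRpow.c_iterate_deriv_three, hroot]
    ring
  · rw [hderiv]
    norm_num
  · rw [hderiv, QuadRpow.c_iterate_deriv_five hroot, hσ]
    ring
end

section
/- Let σ > 0 and q(y) = −1 + y^{2σ+1} + (1+2σ)y^σ − (1+2σ)y^{σ+1}. Then q(y) ≤ 0 for all y ∈ [0,1]. -/
open Real Set

private lemma stmt_12_aux (σ : ℝ) (hσ : 0 < σ) :
    AntitoneOn (fun y : ℝ => 1 - y ^ (2 * σ + 1) - (1 + 2 * σ) * y ^ σ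
      + (1 + 2 * σ) * y ^ (σ + 1)) (Icc (0 : ℝ) 1) := by
  apply antitoneOn_of_deriv_nonpos (convex_Icc 0 1)
  · apply ContinuousOn.add
    apply ContinuousOn.sub
    apply ContinuousOn.sub
    · exact continuousOn_const
    · exact (Real.continuous_rpow_const (by linarith)).continuousOn
    · exact (continuous_const.mul (Real.continuous_rpow_const hσ.le)).continuousOn
    · exact (continuous_const.mul (Real.continuous_rpow_const (by linarith))).continuousOn
  · rw [interior_Icc]
    intro x hx
    have hx0 : x ≠ 0 := ne_of_gt hx.1
    exact (((((Real.hasDerivAt_rpow_const (p := 2 * σ + 1) (Or.inl hx0)).const_sub 1).sub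
      ((Real.hasDerivAt_rpow_const (p := σ) (Or.inl hx0)).const_mul (1 + 2 * σ))).add
      ((Real.hasDerivAt_rpow_const (p := σ + 1) (Or.inl hx0)).const_mul
        (1 + 2 * σ))).differentiableAt.differentiableWithinAt)
  · rw [interior_Icc]
    intro x hx
    have hx0 : (0 : ℝ) < x := hx.1
    have hx0' : x ≠ 0 := ne_of_gt hx0
    have hder : HasDerivAt (fun y : ℝ => 1 - y ^ (2 * σ + 1) - (1 + 2 * σ) * y ^ σ
        + (1 + 2 * σ) * y ^ (σ + 1))
        (-( (2 * σ + 1) * x ^ (2 * σ + 1 - 1)) - (1 + 2 * σ) * (σ * x ^ (σ - 1))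
          + (1 + 2 * σ) * ((σ + 1) * x ^ (σ + 1 - 1))) x :=
      ((((Real.hasDerivAt_rpow_const (p := 2 * σ + 1) (Or.inl hx0')).const_sub 1).sub
        ((Real.hasDerivAt_rpow_const (p := σ) (Or.inl hx0')).const_mul (1 + 2 * σ))).add
        ((Real.hasDerivAt_rpow_const (p := σ + 1) (Or.inl hx0')).const_mul (1 + 2 * σ)))
    rw [hder.deriv]
    have h1 : 2 * σ + 1 - 1 = 2 * σ := by ring
    have h2 : σ + 1 - 1 = σ := by ring
    rw [h1, h2]
    -- Key inequality: (σ+1) * x ≤ x^(σ+1) + σ  (Bernoulli)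
    have hbern : 1 + (σ + 1) * (x - 1) ≤ (1 + (x - 1)) ^ (σ + 1) :=
      one_add_mul_self_le_rpow_one_add (by linarith [hx.1]) (by linarith)
    have hbern' : (σ + 1) * x ≤ x ^ (σ + 1) + σ := by
      have : (1 : ℝ) + (x - 1) = x := by ring
      rw [this] at hbern; nlinarith
    -- multiply by x^(σ-1) ≥ 0
    have hxp : (0 : ℝ) ≤ x ^ (σ - 1) := Real.rpow_nonneg hx0.le _
    have e1 : x ^ (2 * σ) = x ^ (σ - 1) * x ^ (σ + 1) := by
      rw [← Real.rpow_add hx0]; ring_nf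
    have e2 : x ^ σ = x ^ (σ - 1) * x := by
      have h := Real.rpow_add hx0 (σ - 1) 1
      rw [Real.rpow_one] at h
      rw [← h]; ring_nf
    have key : (σ + 1) * x ^ σ ≤ x ^ (2 * σ) + σ * x ^ (σ - 1) := by
      rw [e1, e2]
      calc (σ + 1) * (x ^ (σ - 1) * x) = x ^ (σ - 1) * ((σ + 1) * x) := by ring
        _ ≤ x ^ (σ - 1) * (x ^ (σ + 1) + σ) := by
            exact mul_le_mul_of_nonneg_left hbern' hxp
        _ = x ^ (σ - 1) * x ^ (σ + 1) + σ * x ^ (σ - 1) := by ring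
    nlinarith [key, hσ]

/-- `q(y) ≤ 0` on `[0,1]`. -/
theorem stmt_12 (σ : ℝ) (hσ : 0 < σ) (q : ℝ → ℝ)
    (hq : ∀ y : ℝ, q y = -1 + y ^ (2 * σ + 1) + (1 + 2 * σ) * y ^ σ
        - (1 + 2 * σ) * y ^ (σ + 1)) :
    ∀ y ∈ Set.Icc (0 : ℝ) 1, q y ≤ 0 := by
  intro y hy
  have h := stmt_12_aux σ hσ hy (right_mem_Icc.mpr zero_le_one) hy.2
  simp only [Real.one_rpow] at h
  rw [hq y]
  nlinarith [h]
end

section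
/- Let σ > 0 and Q(z) = −(4σ+2)·z·(1−z²)^σ + (1+z)^{2σ+1} − (1−z)^{2σ+1} for z ∈ (−1,1). Then Q(0) = 0, Q(−z) = −Q(z), and Q′(z) = (2σ+1)·[4z²σ(1−z²)^{σ−1} + ((1−z)^σ − (1+z)^σ)²], which is strictly positive for every z ∈ (−1,1) with z ≠ 0. In particular Q(z) > 0 for z ∈ (0,1) and Q(z) < 0 for z ∈ (−1,0). -/
/-!
Differentiating, the terms of `Q′` combine (using `(1 - z²)^σ = (1 - z)^σ (1 + z)^σ`) into
`(2σ + 1)` times a sum of a square and a term that is positive for `z ≠ 0`. Hence `Q` is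
strictly increasing on `[0, 1)` with `Q 0 = 0`, and oddness transfers the sign to `(-1, 0)`.
-/

open Real Set

noncomputable section

namespace DoubleWell

def Q (σ z : ℝ) : ℝ :=
  -((4 * σ + 2) * z * (1 - z ^ 2) ^ σ) + (1 + z) ^ (2 * σ + 1) - (1 - z) ^ (2 * σ + 1)

def derivQ (σ z : ℝ) : ℝ :=
  (2 * σ + 1) * (4 * z ^ 2 * σ * (1 - z ^ 2) ^ (σ - 1) + ((1 - z) ^ σ - (1 + z) ^ σ) ^ 2)

variable {σ z : ℝ}

theorem Q_zero (σ : ℝ) : Q σ 0 = 0 := by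
  simp [Q]

theorem Q_neg (σ z : ℝ) : Q σ (-z) = -Q σ z := by
  simp only [Q, neg_sq, ← sub_eq_add_neg, sub_neg_eq_add]
  ring

theorem rpow_two_mul_add_one_sub_one {x : ℝ} (hx : 0 < x) (σ : ℝ) :
    x ^ (2 * σ + 1 - 1) = (x ^ σ) ^ 2 := by
  rw [sq, ← rpow_add hx]
  ring_nf

theorem hasDerivAt_Q (hz : z ∈ Ioo (-1 : ℝ) 1) : HasDerivAt (Q σ) (derivQ σ z) z := by
  have hm : 0 < 1 - z := by linarith [hz.2]
  have hp : 0 < 1 + z := by linarith [hz.1]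
  have hsq : 0 < 1 - z ^ 2 := by nlinarith
  have d_sq : HasDerivAt (fun z : ℝ => (1 - z ^ 2) ^ σ)
      (-(2 * z) * σ * (1 - z ^ 2) ^ (σ - 1)) z := by
    have := ((hasDerivAt_pow 2 z).const_sub 1).rpow_const (p := σ) (Or.inl hsq.ne')
    simpa using this
  have d_prod := (((hasDerivAt_id' z).const_mul (4 * σ + 2)).fun_mul d_sq).fun_neg
  have d_p := ((hasDerivAt_id' z).const_add 1).rpow_const (p := 2 * σ + 1) (Or.inl hp.ne')
  have d_m := ((hasDerivAt_id' z).const_sub 1).rpow_const (p := 2 * σ + 1) (Or.inl hm.ne')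
  refine ((d_prod.fun_add d_p).fun_sub d_m).congr_deriv ?_
  have h_split : (1 - z ^ 2) ^ σ = (1 - z) ^ σ * (1 + z) ^ σ := by
    rw [← mul_rpow hm.le hp.le]
    ring_nf
  simp only [derivQ, rpow_two_mul_add_one_sub_one hp, rpow_two_mul_add_one_sub_one hm,
    h_split]
  ring

theorem derivQ_pos (hσ : 0 < σ) (hz : z ∈ Ioo (-1 : ℝ) 1) (hz0 : z ≠ 0) : 0 < derivQ σ z := by
  have hsq : 0 < 1 - z ^ 2 := by nlinarith [hz.1, hz.2]
  have := rpow_pos_of_pos hsq (σ - 1)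
  unfold derivQ
  positivity

theorem strictMonoOn_Q (hσ : 0 < σ) : StrictMonoOn (Q σ) (Ico 0 1) := by
  have hsub : Ico (0 : ℝ) 1 ⊆ Ioo (-1) 1 := fun x hx => ⟨by linarith [hx.1], hx.2⟩
  refine strictMonoOn_of_deriv_pos (convex_Ico 0 1)
    (fun x hx => (hasDerivAt_Q (hsub hx)).continuousAt.continuousWithinAt) fun x hx => ?_
  rw [interior_Ico] at hx
  have hx' := hsub (Ioo_subset_Ico_self hx)
  rw [(hasDerivAt_Q hx').deriv]
  exact derivQ_pos hσ hx' hx.1.ne'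

theorem Q_pos (hσ : 0 < σ) (hz : z ∈ Ioo (0 : ℝ) 1) : 0 < Q σ z := by
  simpa [Q_zero] using strictMonoOn_Q hσ ⟨le_rfl, one_pos⟩ (Ioo_subset_Ico_self hz) hz.1

theorem Q_neg_of_neg (hσ : 0 < σ) (hz : z ∈ Ioo (-1 : ℝ) 0) : Q σ z < 0 := by
  have := Q_pos hσ (z := -z) ⟨by linarith [hz.2], by linarith [hz.1]⟩
  rw [Q_neg] at this
  linarith

end DoubleWell

end

/-- oddness of `Q`, the formula for `Q′`, its strict positivity away
from `0`, and the resulting sign of `Q` on `(−1,1)`. -/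
theorem stmt_13 (σ : ℝ) (hσ : 0 < σ) (Q : ℝ → ℝ)
    (hQ : ∀ z : ℝ, Q z = -((4 * σ + 2) * z * (1 - z ^ 2) ^ σ)
        + (1 + z) ^ (2 * σ + 1) - (1 - z) ^ (2 * σ + 1)) :
    Q 0 = 0 ∧
    (∀ z ∈ Set.Ioo (-1 : ℝ) 1, Q (-z) = -Q z) ∧
    (∀ z ∈ Set.Ioo (-1 : ℝ) 1,
      deriv Q z = (2 * σ + 1) *
        (4 * z ^ 2 * σ * (1 - z ^ 2) ^ (σ - 1) + ((1 - z) ^ σ - (1 + z) ^ σ) ^ 2)) ∧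
    (∀ z ∈ Set.Ioo (-1 : ℝ) 1, z ≠ 0 → 0 < deriv Q z) ∧
    (∀ z ∈ Set.Ioo (0 : ℝ) 1, 0 < Q z) ∧
    (∀ z ∈ Set.Ioo (-1 : ℝ) 0, Q z < 0) := by
  obtain rfl : Q = DoubleWell.Q σ := funext hQ
  open DoubleWell in
  exact ⟨Q_zero σ, fun z _ => Q_neg σ z, fun z hz => (hasDerivAt_Q hz).deriv,
    fun z hz hz0 => (hasDerivAt_Q hz).deriv ▸ derivQ_pos hσ hz hz0,
    fun z => Q_pos hσ, fun z => Q_neg_of_neg hσ⟩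
end

section
/- Consider the Hamiltonian H(θ,z) = −√(1−z²)·cos θ + (η/(σ+1))·[((1+z)/2)^{σ+1} + ((1−z)/2)^{σ+1}] on (θ,z) ∈ ℝ × (−1,1), with σ > 0 and η ∈ ℝ. At the stationary point (θ, z) = (0, 0), the determinant of the linearization matrix (Hessian-type matrix with zero trace) equals 1 + η·σ/2^σ; at the stationary point (θ, z) = (π, 0) it equals 1 − η·σ/2^σ. Hence the symmetric state (0,0) is a linearly stable center iff η > −2^σ/σ and the antisymmetric state (π,0) is a linearly stable center iff η < 2^σ/σ. -/
/-!
On the line z = 0 the z-derivative of H vanishes for every θ (√(1 - z²) is stationary there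
and the interaction term is even in z), so the mixed partial is zero and the determinant is
∂²H/∂θ² · ∂²H/∂z² = cos θ · (cos θ + η σ / 2 ^ σ). The nonlinear term contributes
η σ (1/2)^(σ-1) / 2 = η σ / 2 ^ σ to ∂²H/∂z², and the stability criteria are the sign
conditions on 1 ± η σ / 2 ^ σ.
-/

open Real Topology Set

lemma iteratedDeriv_two_eq_of_hasDerivAt {f f' : ℝ → ℝ} {x a : ℝ}
    (hf : ∀ᶠ y in 𝓝 x, HasDerivAt f (f' y) y) (hf' : HasDerivAt f' a x) :
    iteratedDeriv 2 f x = a := by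
  have hderiv : deriv f =ᶠ[𝓝 x] f' := hf.mono fun y hy => hy.deriv
  rw [iteratedDeriv_succ, iteratedDeriv_one, hderiv.deriv_eq, hf'.deriv]

lemma hasDerivAt_one_add_div_two_rpow (p : ℝ) {z : ℝ} (hz : -1 < z) :
    HasDerivAt (fun z : ℝ => ((1 + z) / 2) ^ p) (p * ((1 + z) / 2) ^ (p - 1) / 2) z := by
  have hlin : HasDerivAt (fun z : ℝ => (1 + z) / 2) (1 / 2) z :=
    ((hasDerivAt_id z).const_add 1).div_const 2
  convert hlin.rpow_const (p := p) (Or.inl (by linarith)) using 1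
  ring

lemma hasDerivAt_one_sub_div_two_rpow (p : ℝ) {z : ℝ} (hz : z < 1) :
    HasDerivAt (fun z : ℝ => ((1 - z) / 2) ^ p) (-(p * ((1 - z) / 2) ^ (p - 1) / 2)) z := by
  have hlin : HasDerivAt (fun z : ℝ => (1 - z) / 2) (-1 / 2) z :=
    ((hasDerivAt_id z).const_sub 1).div_const 2
  convert hlin.rpow_const (p := p) (Or.inl (by linarith)) using 1
  ring

lemma hasDerivAt_sqrt_one_sub_sq {z : ℝ} (hz : z ^ 2 < 1) :
    HasDerivAt (fun z : ℝ => √(1 - z ^ 2)) (-(z / √(1 - z ^ 2))) z := by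
  convert ((hasDerivAt_pow 2 z).const_sub 1).sqrt (by linarith) using 1
  field_simp
  ring

lemma hasDerivAt_div_sqrt_one_sub_sq_zero :
    HasDerivAt (fun z : ℝ => z / √(1 - z ^ 2)) 1 0 := by
  have h := (hasDerivAt_id' (0 : ℝ)).div (hasDerivAt_sqrt_one_sub_sq (by norm_num))
    (by norm_num)
  norm_num at h
  exact h

lemma half_rpow_sub_one_div_two (p : ℝ) : (1 / 2 : ℝ) ^ (p - 1) / 2 = 1 / 2 ^ p := by
  rw [rpow_sub_one (by norm_num), div_rpow zero_le_one zero_le_two, one_rpow]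
  field_simp

lemma zero_lt_one_add_mul_div_iff {a s η : ℝ} (ha : 0 < a) (hs : 0 < s) :
    0 < 1 + η * s / a ↔ -(a / s) < η := by
  rw [one_add_div ha.ne', div_pos_iff_of_pos_right ha, neg_lt, lt_div_iff₀ hs]
  constructor <;> intro h <;> linarith

lemma zero_lt_one_sub_mul_div_iff {a s η : ℝ} (ha : 0 < a) (hs : 0 < s) :
    0 < 1 - η * s / a ↔ η < a / s := by
  rw [one_sub_div ha.ne', div_pos_iff_of_pos_right ha, sub_pos, lt_div_iff₀ hs]

namespace TwoLevel

noncomputable def hamiltonian (σ η θ z : ℝ) : ℝ :=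
  -√(1 - z ^ 2) * cos θ + η / (σ + 1) * (((1 + z) / 2) ^ (σ + 1) + ((1 - z) / 2) ^ (σ + 1))

noncomputable def hamiltonianDerivZ (σ η θ z : ℝ) : ℝ :=
  z / √(1 - z ^ 2) * cos θ + η / 2 * (((1 + z) / 2) ^ σ - ((1 - z) / 2) ^ σ)

variable {σ : ℝ} (η : ℝ)

lemma hasDerivAt_hamiltonian_z (hσ : σ + 1 ≠ 0) (θ : ℝ) {z : ℝ} (hz : z ∈ Ioo (-1) 1) :
    HasDerivAt (hamiltonian σ η θ) (hamiltonianDerivZ σ η θ z) z := by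
  have hsq : z ^ 2 < 1 := by rw [sq_lt_one_iff_abs_lt_one, abs_lt]; exact hz
  have h := ((hasDerivAt_sqrt_one_sub_sq hsq).neg.mul_const (cos θ)).add
    (((hasDerivAt_one_add_div_two_rpow (σ + 1) hz.1).add
      (hasDerivAt_one_sub_div_two_rpow (σ + 1) hz.2)).const_mul (η / (σ + 1)))
  rw [add_sub_cancel_right] at h
  refine h.congr_deriv ?_
  simp only [hamiltonianDerivZ]
  field_simp
  ring

lemma eventually_hasDerivAt_hamiltonian_z (hσ : σ + 1 ≠ 0) (θ : ℝ) :
    ∀ᶠ z in 𝓝 0, HasDerivAt (hamiltonian σ η θ) (hamiltonianDerivZ σ η θ z) z := by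
  filter_upwards [Ioo_mem_nhds (by norm_num : (-1 : ℝ) < 0) one_pos] with z hz
  exact hasDerivAt_hamiltonian_z η hσ θ hz

lemma hasDerivAt_hamiltonianDerivZ_zero (θ : ℝ) :
    HasDerivAt (hamiltonianDerivZ σ η θ) (cos θ + η * σ / 2 ^ σ) 0 := by
  have h := (hasDerivAt_div_sqrt_one_sub_sq_zero.mul_const (cos θ)).add
    (((hasDerivAt_one_add_div_two_rpow σ (by norm_num : (-1 : ℝ) < 0)).sub
      (hasDerivAt_one_sub_div_two_rpow σ (by norm_num : (0 : ℝ) < 1))).const_mul (η / 2))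
  refine (h : HasDerivAt (hamiltonianDerivZ σ η θ) _ 0).congr_deriv ?_
  simp only [add_zero, sub_zero, one_mul]
  linear_combination η * σ * half_rpow_sub_one_div_two σ

lemma deriv_hamiltonian_z_zero (hσ : σ + 1 ≠ 0) (θ : ℝ) :
    deriv (hamiltonian σ η θ) 0 = 0 := by
  rw [(hasDerivAt_hamiltonian_z η hσ θ (by norm_num)).deriv]
  simp [hamiltonianDerivZ]

lemma iteratedDeriv_two_hamiltonian_z_zero (hσ : σ + 1 ≠ 0) (θ : ℝ) :
    iteratedDeriv 2 (hamiltonian σ η θ) 0 = cos θ + η * σ / 2 ^ σ :=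
  iteratedDeriv_two_eq_of_hasDerivAt (eventually_hasDerivAt_hamiltonian_z η hσ θ)
    (hasDerivAt_hamiltonianDerivZ_zero η θ)

lemma iteratedDeriv_two_hamiltonian_θ (θ : ℝ) :
    iteratedDeriv 2 (fun θ => hamiltonian σ η θ 0) θ = cos θ := by
  refine iteratedDeriv_two_eq_of_hasDerivAt (.of_forall fun θ => ?_) (hasDerivAt_sin θ)
  have h := ((hasDerivAt_cos θ).const_mul (-√(1 - (0 : ℝ) ^ 2))).add_const
    (η / (σ + 1) * (((1 + 0) / 2) ^ (σ + 1) + ((1 - 0) / 2) ^ (σ + 1)))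
  exact h.congr_deriv (by norm_num)

lemma deriv_deriv_hamiltonian_mixed (hσ : σ + 1 ≠ 0) (θ : ℝ) :
    deriv (fun θ => deriv (hamiltonian σ η θ) 0) θ = 0 := by
  simp only [deriv_hamiltonian_z_zero η hσ, deriv_const]

end TwoLevel

open TwoLevel

noncomputable def hessianDet (H : ℝ → ℝ → ℝ) (θ₀ z₀ : ℝ) : ℝ :=
  iteratedDeriv 2 (fun θ => H θ z₀) θ₀ * iteratedDeriv 2 (fun z => H θ₀ z) z₀ -
    (deriv (fun θ => deriv (fun z => H θ z) z₀) θ₀) ^ 2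

lemma hessianDet_hamiltonian {σ : ℝ} (η : ℝ) (hσ : σ + 1 ≠ 0) (θ : ℝ) :
    hessianDet (hamiltonian σ η) θ 0 = cos θ * (cos θ + η * σ / 2 ^ σ) := by
  rw [hessianDet, iteratedDeriv_two_hamiltonian_θ, iteratedDeriv_two_hamiltonian_z_zero η hσ,
    deriv_deriv_hamiltonian_mixed η hσ]
  ring

/-- determinant of the zero-trace linearization of the two-level
Hamiltonian at the symmetric and antisymmetric stationary points, and the
resulting stability criteria. -/
theorem stmt_14 (σ η : ℝ) (hσ : 0 < σ) (H : ℝ → ℝ → ℝ)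
    (hH : ∀ θ z : ℝ, H θ z = -Real.sqrt (1 - z ^ 2) * Real.cos θ +
      η / (σ + 1) * (((1 + z) / 2) ^ (σ + 1) + ((1 - z) / 2) ^ (σ + 1)))
    (D : ℝ → ℝ → ℝ)
    (hD : ∀ θ₀ z₀ : ℝ, D θ₀ z₀ =
      iteratedDeriv 2 (fun θ => H θ z₀) θ₀ * iteratedDeriv 2 (fun z => H θ₀ z) z₀ -
        (deriv (fun θ => deriv (fun z => H θ z) z₀) θ₀) ^ 2) :
    D 0 0 = 1 + η * σ / (2 : ℝ) ^ σ ∧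
    D Real.pi 0 = 1 - η * σ / (2 : ℝ) ^ σ ∧
    (0 < D 0 0 ↔ -((2 : ℝ) ^ σ / σ) < η) ∧
    (0 < D Real.pi 0 ↔ η < (2 : ℝ) ^ σ / σ) := by
  obtain rfl : H = hamiltonian σ η := funext₂ hH
  obtain rfl : D = hessianDet (hamiltonian σ η) := funext₂ hD
  have hσ1 : σ + 1 ≠ 0 := by positivity
  have hpow : (0 : ℝ) < 2 ^ σ := by positivity
  have hzero : hessianDet (hamiltonian σ η) 0 0 = 1 + η * σ / 2 ^ σ := by
    rw [hessianDet_hamiltonian η hσ1, cos_zero, one_mul]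
  have hpi : hessianDet (hamiltonian σ η) π 0 = 1 - η * σ / 2 ^ σ := by
    rw [hessianDet_hamiltonian η hσ1, cos_pi]
    ring
  rw [hzero, hpi]
  exact ⟨rfl, rfl, zero_lt_one_add_mul_div_iff hpow hσ, zero_lt_one_sub_mul_div_iff hpow hσ⟩
end

section
/- Let σ > 0 and for θ = 0 consider det Hess(z) = √(1−z²)·[(1−z²)^{−3/2} + (ησ/4)·(((1+z)/2)^{σ−1} + ((1−z)/2)^{σ−1})]. Substituting η = η(z) = −(2z/√(1−z²))·[((1+z)/2)^σ − ((1−z)/2)^σ]^{−1}·(−1) appropriately (i.e. the root of f(z,η)=0), one obtains det Hess(z)|_{η=η(z)} = (g(z) − g(−z)) / ((1−z²)·[(1+z)^σ − (1−z)^σ]), where g(z) = (σz² − σz + 1)(1+z)^σ. -/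
/-! With `a = 1 + z`, `b = 1 - z`, `A = a ^ σ`, `B = b ^ σ`, the powers of `2` cancel between `η(z)` and
the `(σ - 1)`-th powers, and `√(ab)` cancels against `η(z)`, so that
`det Hess(z) = (A - B - σ z (b A + a B)) / (ab (A - B))`; the numerator is `g(z) - g(-z)`. -/

lemma Real.sqrt_mul_rpow_neg_three_halves {x : ℝ} (hx : 0 < x) :
    √x * x ^ (-(3 : ℝ) / 2) = x⁻¹ := by
  rw [Real.sqrt_eq_rpow, ← Real.rpow_add hx]
  norm_num [Real.rpow_neg_one]

lemma Real.div_rpow_sub_one {a c : ℝ} (ha : 0 < a) (hc : 0 < c) (σ : ℝ) :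
    (a / c) ^ (σ - 1) = a ^ σ / c ^ σ * (c / a) := by
  rw [Real.rpow_sub_one (div_pos ha hc).ne', Real.div_rpow ha.le hc.le, div_div_eq_mul_div, mul_div_assoc]

lemma Real.div_rpow_sub_div_rpow {a b c : ℝ} (ha : 0 ≤ a) (hb : 0 ≤ b) (hc : 0 ≤ c) (σ : ℝ) :
    (a / c) ^ σ - (b / c) ^ σ = (a ^ σ - b ^ σ) / c ^ σ := by
  rw [Real.div_rpow ha hc, Real.div_rpow hb hc, div_sub_div_same]

/-- along the bifurcation branch `η = η(z)`, the determinant of the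
Hessian at `θ = 0` equals `(g(z) − g(−z)) / ((1−z²)[(1+z)^σ − (1−z)^σ])`. -/
theorem stmt_15 (σ : ℝ) (hσ : 0 < σ) (η g detH : ℝ → ℝ)
    (hη : ∀ z : ℝ, η z = -(2 * z / Real.sqrt (1 - z ^ 2)) *
      (((1 + z) / 2) ^ σ - ((1 - z) / 2) ^ σ)⁻¹)
    (hg : ∀ z : ℝ, g z = (σ * z ^ 2 - σ * z + 1) * (1 + z) ^ σ)
    (hdet : ∀ z : ℝ, detH z = Real.sqrt (1 - z ^ 2) *
      ((1 - z ^ 2) ^ (-(3 : ℝ) / 2) +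
        η z * σ / 4 * (((1 + z) / 2) ^ (σ - 1) + ((1 - z) / 2) ^ (σ - 1)))) :
    ∀ z ∈ Set.Ioo (0 : ℝ) 1,
      detH z = (g z - g (-z)) / ((1 - z ^ 2) * ((1 + z) ^ σ - (1 - z) ^ σ)) := by
  rintro z ⟨hz0, hz1⟩
  have ha : 0 < 1 + z := by linarith
  have hb : 0 < 1 - z := by linarith
  have hab : 0 < 1 - z ^ 2 := by nlinarith
  have hsqrt : 0 < √(1 - z ^ 2) := Real.sqrt_pos.mpr hab
  have hAB : (1 + z) ^ σ - (1 - z) ^ σ ≠ 0 :=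
    (sub_pos.mpr (Real.rpow_lt_rpow hb.le (by linarith) hσ)).ne'
  have h2σ : (0 : ℝ) < 2 ^ σ := Real.rpow_pos_of_pos two_pos σ
  rw [hdet, hη, hg, hg, mul_add, Real.sqrt_mul_rpow_neg_three_halves hab,
    Real.div_rpow_sub_div_rpow ha.le hb.le zero_le_two, Real.div_rpow_sub_one ha two_pos,
    Real.div_rpow_sub_one hb two_pos, ← sub_eq_add_neg]
  field_simp
  ring
end
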